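/- arXiv:2104.11609 — 5 statements merged into one kernel-verified Lean document; each statement's English description precedes it below -/
import Mathlib

section
/- Suppose y* minimizes J_i(·, y*_{-i}) + φ(·, y*_{-i}) for every i, where φ is the log-barrier with parameter ρ > 0 for the constraints g(y) ≤ 0 (g having p components). Then y* is an ε-generalized Nash equilibrium of the constrained game with ε = pρ; that is, for every i, J_i(y*_i, y*_{-i}) ≤ inf{ J_i(y_i, y*_{-i}) + pρ : g(y_i, y*_{-i}) ≤ 0 }. -/
/-!
Move from the barrier equilibrium `x₀` towards a feasible `z` along `w = s • x₀ + (1 - s) • z`.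
By convexity `-c ℓ w ≥ s * (-c ℓ x₀)`, so the barrier grows by at most `-p ρ log s`, while the cost
drops by at least `(1 - s) (f x₀ - f z)`. Optimality of `x₀` for cost plus barrier, together with
`-s log s ≤ 1 - s`, then gives `s (f x₀ - f z) ≤ p ρ` for every `s < 1`; let `s → 1`.
-/

open Filter Topology Set

noncomputable def logBarrier {ι α : Type*} [Fintype ι] (ρ : ℝ) (c : ι → α → ℝ) (x : α) : ℝ :=
  -ρ * ∑ ℓ, Real.log (-c ℓ x)

theorem logBarrier_le_sub_mul_log {ι α : Type*} [Fintype ι] {ρ s : ℝ} {c : ι → α → ℝ} {x w : α}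
    (hρ : 0 ≤ ρ) (hs : 0 < s) (hx : ∀ ℓ, c ℓ x < 0) (hw : ∀ ℓ, s * -c ℓ x ≤ -c ℓ w) :
    logBarrier ρ c w ≤ logBarrier ρ c x - Fintype.card ι * ρ * Real.log s := by
  have hlog : ∀ ℓ, Real.log s + Real.log (-c ℓ x) ≤ Real.log (-c ℓ w) := fun ℓ => by
    have hxℓ : 0 < -c ℓ x := neg_pos.mpr (hx ℓ)
    rw [← Real.log_mul hs.ne' hxℓ.ne']
    exact Real.log_le_log (mul_pos hs hxℓ) (hw ℓ)
  have hsum : Fintype.card ι * Real.log s + ∑ ℓ, Real.log (-c ℓ x) ≤ ∑ ℓ, Real.log (-c ℓ w) := by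
    rw [← nsmul_eq_mul, ← Finset.card_univ, ← Finset.sum_const, ← Finset.sum_add_distrib]
    exact Finset.sum_le_sum fun ℓ _ => hlog ℓ
  unfold logBarrier
  linarith [mul_le_mul_of_nonneg_left hsum hρ]

theorem ConvexOn.le_mul_of_nonpos {E : Type*} [AddCommGroup E] [Module ℝ E] {S : Set E}
    {f : E → ℝ} {x z : E} {s : ℝ} (hf : ConvexOn ℝ S f) (hx : x ∈ S) (hz : z ∈ S)
    (hfz : f z ≤ 0) (hs₀ : 0 ≤ s) (hs₁ : s ≤ 1) :
    f (s • x + (1 - s) • z) ≤ s * f x := by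
  have := hf.2 hx hz hs₀ (sub_nonneg.mpr hs₁) (by ring)
  simp only [smul_eq_mul] at this
  linarith [mul_nonpos_of_nonneg_of_nonpos (sub_nonneg.mpr hs₁) hfz]

theorem le_of_forall_mul_le_of_mem_Ioo {a b : ℝ} (h : ∀ s ∈ Ioo (0 : ℝ) 1, s * a ≤ b) : a ≤ b := by
  have hlim : Tendsto (fun s : ℝ => s * a) (𝓝[<] 1) (𝓝 a) :=
    ((continuous_mul_const a).tendsto' 1 a (one_mul a)).mono_left nhdsWithin_le_nhds
  exact le_of_tendsto hlim (eventually_of_mem (Ioo_mem_nhdsLT zero_lt_one) h)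

theorem le_add_card_mul_of_isMinOn_add_logBarrier {ι E : Type*} [Fintype ι] [AddCommGroup E]
    [Module ℝ E] {S : Set E} {f : E → ℝ} {c : ι → E → ℝ} {ρ : ℝ} {x₀ z : E}
    (hf : ConvexOn ℝ S f) (hc : ∀ ℓ, ConvexOn ℝ S (c ℓ)) (hρ : 0 ≤ ρ)
    (hx₀ : x₀ ∈ S) (hx₀c : ∀ ℓ, c ℓ x₀ < 0)
    (hmin : IsMinOn (f + logBarrier ρ c) (S ∩ {x | ∀ ℓ, c ℓ x < 0}) x₀)
    (hz : z ∈ S) (hzc : ∀ ℓ, c ℓ z ≤ 0) :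
    f x₀ ≤ f z + Fintype.card ι * ρ := by
  set K : ℝ := (Fintype.card ι : ℝ)
  suffices h : ∀ s ∈ Ioo (0 : ℝ) 1, s * (f x₀ - f z) ≤ K * ρ by
    linarith [le_of_forall_mul_le_of_mem_Ioo h]
  rintro s ⟨hs₀, hs₁⟩
  set w := s • x₀ + (1 - s) • z
  have hcw : ∀ ℓ, c ℓ w ≤ s * c ℓ x₀ := fun ℓ =>
    (hc ℓ).le_mul_of_nonpos hx₀ hz (hzc ℓ) hs₀.le hs₁.le
  have hw : w ∈ S ∩ {x | ∀ ℓ, c ℓ x < 0} :=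
    ⟨hf.1 hx₀ hz hs₀.le (by linarith) (by ring),
      fun ℓ => (hcw ℓ).trans_lt (mul_neg_of_pos_of_neg hs₀ (hx₀c ℓ))⟩
  have hfw : f w ≤ s * f x₀ + (1 - s) * f z := hf.2 hx₀ hz hs₀.le (by linarith) (by ring)
  have hbar : logBarrier ρ c w ≤ logBarrier ρ c x₀ - K * ρ * Real.log s :=
    logBarrier_le_sub_mul_log hρ hs₀ hx₀c fun ℓ => by linarith [hcw ℓ]
  have hopt : f x₀ + logBarrier ρ c x₀ ≤ f w + logBarrier ρ c w := hmin hw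
  have hdescent : (1 - s) * (f x₀ - f z) ≤ K * ρ * -Real.log s := by linarith
  have hKρ : 0 ≤ K * ρ := mul_nonneg (Nat.cast_nonneg _) hρ
  have h : (1 - s) * (s * (f x₀ - f z)) ≤ (1 - s) * (K * ρ) := calc
    _ = s * ((1 - s) * (f x₀ - f z)) := by ring
    _ ≤ s * (K * ρ * -Real.log s) := mul_le_mul_of_nonneg_left hdescent hs₀.le
    _ = K * ρ * -(s * Real.log s) := by ring
    _ ≤ K * ρ * (1 - s) := mul_le_mul_of_nonneg_left
      (by linarith [Real.self_sub_one_le_mul_log hs₀.le]) hKρ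
    _ = _ := by ring
  exact le_of_mul_le_mul_left h (by linarith)

theorem stmt1_general {N p : ℕ} (m : Fin N → ℕ)
    (J : ∀ _ : Fin N, (∀ j, EuclideanSpace ℝ (Fin (m j))) → ℝ)
    (g : (∀ j, EuclideanSpace ℝ (Fin (m j))) → Fin p → ℝ)
    (ρ : ℝ) (hρ : 0 < ρ)
    (φ : (∀ j, EuclideanSpace ℝ (Fin (m j))) → ℝ)
    (hφ : ∀ y, (∀ ℓ, g y ℓ < 0) → φ y = -ρ * ∑ ℓ, Real.log (-(g y ℓ)))
    (ystar : ∀ j, EuclideanSpace ℝ (Fin (m j)))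
    (hfeas : ∀ ℓ, g ystar ℓ < 0)
    (hJconv : ∀ i, ConvexOn ℝ Set.univ (fun z => J i (Function.update ystar i z)))
    (hgconv : ∀ ℓ i, ConvexOn ℝ Set.univ (fun z => g (Function.update ystar i z) ℓ))
    (hNE : ∀ i z, (∀ ℓ, g (Function.update ystar i z) ℓ < 0) →
      J i ystar + φ ystar ≤ J i (Function.update ystar i z) + φ (Function.update ystar i z)) :
    ∀ i z, (∀ ℓ, g (Function.update ystar i z) ℓ ≤ 0) →
      J i ystar ≤ J i (Function.update ystar i z) + (p : ℝ) * ρ := by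
  intro i z hz
  set c : Fin p → EuclideanSpace ℝ (Fin (m i)) → ℝ := fun ℓ w => g (Function.update ystar i w) ℓ
  have hupd : Function.update ystar i (ystar i) = ystar := Function.update_eq_self i ystar
  have hfeas' : ∀ ℓ, c ℓ (ystar i) < 0 := by simpa [c, hupd] using hfeas
  have hφc : ∀ w, (∀ ℓ, c ℓ w < 0) → φ (Function.update ystar i w) = logBarrier ρ c w :=
    fun w hw => hφ _ hw
  have hmin : IsMinOn ((fun w => J i (Function.update ystar i w)) + logBarrier ρ c)
      (univ ∩ {w | ∀ ℓ, c ℓ w < 0}) (ystar i) := by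
    rintro w ⟨-, hw⟩
    change J i _ + _ ≤ J i _ + _
    rw [← hφc w hw, ← hφc _ hfeas', hupd]
    exact hNE i w hw
  simpa [hupd] using le_add_card_mul_of_isMinOn_add_logBarrier (hJconv i) (fun ℓ => hgconv ℓ i)
    hρ.le (mem_univ _) hfeas' hmin (mem_univ z) hz

/-- if `y*` is a Nash equilibrium of the log-barrier penalized game, then it
is an `ε`-GNE of the constrained game with `ε = pρ`. -/
theorem stmt1 {N p : ℕ} (m : Fin N → ℕ)
    (J : ∀ _ : Fin N, (∀ j, EuclideanSpace ℝ (Fin (m j))) → ℝ)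
    (g : (∀ j, EuclideanSpace ℝ (Fin (m j))) → Fin p → ℝ)
    (ρ : ℝ) (hρ : 0 < ρ)
    (φ : (∀ j, EuclideanSpace ℝ (Fin (m j))) → ℝ)
    (hφ : ∀ y, (∀ ℓ, g y ℓ < 0) → φ y = -ρ * ∑ ℓ, Real.log (-(g y ℓ)))
    (ystar : ∀ j, EuclideanSpace ℝ (Fin (m j)))
    (hfeas : ∀ ℓ, g ystar ℓ < 0)
    (hJconv : ∀ i, ConvexOn ℝ Set.univ (fun z => J i (Function.update ystar i z)))
    (hJC1 : ∀ i, ContDiff ℝ 1 (fun z => J i (Function.update ystar i z)))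
    (hgconv : ∀ ℓ i, ConvexOn ℝ Set.univ (fun z => g (Function.update ystar i z) ℓ))
    (hgC1 : ∀ ℓ i, ContDiff ℝ 1 (fun z => g (Function.update ystar i z) ℓ))
    (hNE : ∀ i z, (∀ ℓ, g (Function.update ystar i z) ℓ < 0) →
      J i ystar + φ ystar ≤ J i (Function.update ystar i z) + φ (Function.update ystar i z)) :
    ∀ i z, (∀ ℓ, g (Function.update ystar i z) ℓ ≤ 0) →
      J i ystar ≤ J i (Function.update ystar i z) + (p : ℝ) * ρ :=
  stmt1_general m J g ρ hρ φ hφ ystar hfeas hJconv hgconv hNE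
end

section
/- Let F : ℝ^m → ℝ^m be strictly monotone, ∇φ monotone, f : ℝ^n → ℝ^n, G ∈ ℝ^{n×m} full column rank, and V : ℝ^n → ℝ strongly convex C¹ with ∇V invertible, such that the map w ↦ -f((∇V)^{-1}(w)) is monotone. Suppose x* satisfies f(x*) - G(F(Gᵀ∇V(x*)) + ∇φ(Gᵀ∇V(x*))) = 0 with F(y*) + ∇φ(y*) = 0 for y* = Gᵀ∇V(x*). If x̄ is any other point with f(x̄) - G(F(ȳ) + ∇φ(ȳ)) = 0 where ȳ = Gᵀ∇V(x̄), then ȳ = y*. -/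
/-!
The pairing `⟪∇V x̄ - ∇V x*, f x̄ - f x*⟫` is `≤ 0` by monotonicity of `-f ∘ (∇V)⁻¹`. Substituting
the equilibrium equations and moving `G` across the inner product as `Gᵀ`, it equals
`⟪ȳ - y*, (F + ∇φ) ȳ - (F + ∇φ) y*⟫`, which is `> 0` unless `ȳ = y*` since `F + ∇φ` is strictly
monotone.
-/

open scoped RealInnerProductSpace

section MonotoneOperator

variable {E : Type*} [NormedAddCommGroup E] [InnerProductSpace ℝ E]

theorem strictMonotone_add_monotone {F D : E → E}
    (hF : ∀ y y', y ≠ y' → 0 < ⟪y - y', F y - F y'⟫) (hD : ∀ y y', 0 ≤ ⟪y - y', D y - D y'⟫)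
    {y y' : E} (h : y ≠ y') : 0 < ⟪y - y', (F y + D y) - (F y' + D y')⟫ := by
  rw [add_sub_add_comm, inner_add_right]
  exact add_pos_of_pos_of_nonneg (hF y y' h) (hD y y')

theorem eq_of_strictMonotone_of_inner_nonpos {T : E → E}
    (hT : ∀ y y', y ≠ y' → 0 < ⟪y - y', T y - T y'⟫) {y y' : E}
    (h : ⟪y - y', T y - T y'⟫ ≤ 0) : y = y' := by
  by_contra hne
  exact (hT y y' hne).not_ge h

end MonotoneOperator

theorem ContinuousLinearMap.inner_sub_map_sub {E F : Type*} [NormedAddCommGroup E]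
    [InnerProductSpace ℝ E] [CompleteSpace E] [NormedAddCommGroup F] [InnerProductSpace ℝ F]
    [CompleteSpace F] (A : E →L[ℝ] F) (w w' : F) (u u' : E) :
    ⟪w - w', A u - A u'⟫ = ⟪adjoint A w - adjoint A w', u - u'⟫ := by
  rw [← map_sub, ← map_sub, adjoint_inner_left]

theorem stmt5_general {n m : ℕ}
    (f : EuclideanSpace ℝ (Fin n) → EuclideanSpace ℝ (Fin n))
    (G : EuclideanSpace ℝ (Fin m) →L[ℝ] EuclideanSpace ℝ (Fin n))
    (F Dφ : EuclideanSpace ℝ (Fin m) → EuclideanSpace ℝ (Fin m))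
    (hF : ∀ y y', y ≠ y' → 0 < ⟪y - y', F y - F y'⟫)
    (hmonφ : ∀ y y', 0 ≤ ⟪y - y', Dφ y - Dφ y'⟫)
    (V : EuclideanSpace ℝ (Fin n) → ℝ)
    (invV : EuclideanSpace ℝ (Fin n) → EuclideanSpace ℝ (Fin n))
    (hinv1 : Function.LeftInverse invV (gradient V))
    (hmonf : ∀ w w', 0 ≤ ⟪w - w', -(f (invV w)) - -(f (invV w'))⟫)
    (xstar : EuclideanSpace ℝ (Fin n)) (ystar : EuclideanSpace ℝ (Fin m))
    (hy : ystar = (ContinuousLinearMap.adjoint G) (gradient V xstar))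
    (heq : f xstar - G (F ystar + Dφ ystar) = 0)
    (xbar : EuclideanSpace ℝ (Fin n)) (ybar : EuclideanSpace ℝ (Fin m))
    (hyb : ybar = (ContinuousLinearMap.adjoint G) (gradient V xbar))
    (heqb : f xbar - G (F ybar + Dφ ybar) = 0) :
    ybar = ystar := by
  have hdissip : ⟪gradient V xbar - gradient V xstar, f xbar - f xstar⟫ ≤ 0 := by
    have h := hmonf (gradient V xbar) (gradient V xstar)
    rw [hinv1 xbar, hinv1 xstar, neg_sub_neg, ← neg_sub (f xbar), inner_neg_right] at h
    exact neg_nonneg.mp h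
  rw [sub_eq_zero.mp heqb, sub_eq_zero.mp heq, G.inner_sub_map_sub, ← hyb, ← hy] at hdissip
  exact eq_of_strictMonotone_of_inner_nonpos (fun y y' => strictMonotone_add_monotone hF hmonφ)
    hdissip

/-- uniqueness of the equilibrium output for the full-information dynamics
(Lemma 6 of the paper): any other equilibrium `x̄` has output `ȳ = y*`. -/
theorem stmt5 {n m : ℕ}
    (f : EuclideanSpace ℝ (Fin n) → EuclideanSpace ℝ (Fin n))
    (G : EuclideanSpace ℝ (Fin m) →L[ℝ] EuclideanSpace ℝ (Fin n))
    (hG : Function.Injective G)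
    (F Dφ : EuclideanSpace ℝ (Fin m) → EuclideanSpace ℝ (Fin m))
    (hF : ∀ y y', y ≠ y' → 0 < ⟪y - y', F y - F y'⟫)
    (hmonφ : ∀ y y', 0 ≤ ⟪y - y', Dφ y - Dφ y'⟫)
    (V : EuclideanSpace ℝ (Fin n) → ℝ)
    (hVsc : ∀ x x', x ≠ x' → 0 < ⟪gradient V x - gradient V x', x - x'⟫)
    (invV : EuclideanSpace ℝ (Fin n) → EuclideanSpace ℝ (Fin n))
    (hinv1 : Function.LeftInverse invV (gradient V))
    (hinv2 : Function.RightInverse invV (gradient V))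
    (hmonf : ∀ w w', 0 ≤ ⟪w - w', -(f (invV w)) - -(f (invV w'))⟫)
    (xstar : EuclideanSpace ℝ (Fin n)) (ystar : EuclideanSpace ℝ (Fin m))
    (hy : ystar = (ContinuousLinearMap.adjoint G) (gradient V xstar))
    (hstat : F ystar + Dφ ystar = 0)
    (heq : f xstar - G (F ystar + Dφ ystar) = 0)
    (xbar : EuclideanSpace ℝ (Fin n)) (ybar : EuclideanSpace ℝ (Fin m))
    (hyb : ybar = (ContinuousLinearMap.adjoint G) (gradient V xbar))
    (heqb : f xbar - G (F ybar + Dφ ybar) = 0) :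
    ybar = ystar :=
  stmt5_general f G F Dφ hF hmonφ V invV hinv1 hmonf xstar ystar hy heq xbar ybar hyb heqb
end

section
/- Let f(x) = Ax with A = [[-vI, kI],[0,0]] and input matrix G = [I; I]ᵀ stacked (i.e., ẋ = Ax + [I;I]u), output y = [I 0]x, with 0 < k < v. Then this system is equilibrium-independent passive: for every equilibrium x̄ with equilibrium input ū and output ȳ, there is a quadratic storage function V^{x̄}(x) ≥ 0 with V^{x̄}(x̄) = 0 such that ∇V^{x̄}(x)ᵀ(Ax + [I;I]u) ≤ (y - ȳ)ᵀ(u - ū) for all x, u. -/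
/-! With `e = x - x̄`, the storage function is
`V(x) = ½‖e₁‖² + k / (2(v - k)) ‖e₁ - e₂‖²`, nonnegative since `0 < k < v`.
Along the dynamics `ẋ₁ - ẋ₂ = -(v e₁ - k e₂)` (the equilibrium satisfies `v x̄₁ = k x̄₂`), and the
weight `k / (v - k)` is chosen so that `(v - k) e₁ + k (e₁ - e₂) = v e₁ - k e₂`; the derivative of
`V` therefore collapses to `⟪e₁, u⟫ - ‖v e₁ - k e₂‖² / (v - k) ≤ ⟪y - ȳ, u - ū⟫`. -/

open scoped RealInnerProductSpace

section BilinearQuadratic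

variable {𝕜 F : Type*} [NontriviallyNormedField 𝕜] [NormedAddCommGroup F] [NormedSpace 𝕜 F]

theorem hasFDerivAt_bilinear_sub_self (B : F →L[𝕜] F →L[𝕜] 𝕜) (a x : F) :
    HasFDerivAt (fun y => B (y - a) (y - a))
      (B.precompR F (x - a) (.id 𝕜 F) + B.precompL F (.id 𝕜 F) (x - a)) x :=
  B.hasFDerivAt_of_bilinear ((hasFDerivAt_id x).sub_const a) ((hasFDerivAt_id x).sub_const a)

theorem differentiable_bilinear_sub_self (B : F →L[𝕜] F →L[𝕜] 𝕜) (a : F) :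
    Differentiable 𝕜 (fun y => B (y - a) (y - a)) :=
  fun x => (hasFDerivAt_bilinear_sub_self B a x).differentiableAt

theorem fderiv_bilinear_sub_self_apply (B : F →L[𝕜] F →L[𝕜] 𝕜) (a x h : F) :
    fderiv 𝕜 (fun y => B (y - a) (y - a)) x h = B (x - a) h + B h (x - a) := by
  rw [(hasFDerivAt_bilinear_sub_self B a x).fderiv]
  simp

end BilinearQuadratic

section PICascade

variable {E : Type*} [NormedAddCommGroup E] [InnerProductSpace ℝ E]

noncomputable def piStorageForm (v k : ℝ) : E × E →L[ℝ] E × E →L[ℝ] ℝ :=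
  let δ := ContinuousLinearMap.fst ℝ E E - ContinuousLinearMap.snd ℝ E E
  (2⁻¹ : ℝ) • ((innerSL ℝ).bilinearComp (.fst ℝ E E) (.fst ℝ E E) +
    (k / (v - k)) • (innerSL ℝ).bilinearComp δ δ)

theorem piStorageForm_apply (v k : ℝ) (p q : E × E) :
    piStorageForm v k p q = 2⁻¹ * (⟪p.1, q.1⟫ + k / (v - k) * ⟪p.1 - p.2, q.1 - q.2⟫) := by
  simp [piStorageForm, inner_sub_left]
  ring

theorem piStorageForm_self_nonneg {v k : ℝ} (hk : 0 ≤ k) (hv : k < v) (p : E × E) :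
    0 ≤ piStorageForm v k p p := by
  rw [piStorageForm_apply]
  have hκ : 0 ≤ k / (v - k) := div_nonneg hk (sub_pos.2 hv).le
  have := real_inner_self_nonneg (x := p.1)
  have := real_inner_self_nonneg (x := p.1 - p.2)
  positivity

theorem piStorageForm_along_field {v k : ℝ} (hv : k < v) (e : E × E) (u : E) :
    piStorageForm v k e (-v • e.1 + k • e.2 + u, u) +
        piStorageForm v k (-v • e.1 + k • e.2 + u, u) e =
      ⟪e.1, u⟫ - ‖v • e.1 - k • e.2‖ ^ 2 / (v - k) := by
  have hvk : v - k ≠ 0 := (sub_pos.2 hv).ne'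
  simp only [piStorageForm_apply, ← real_inner_self_eq_norm_sq, inner_add_left, inner_add_right,
    inner_sub_left, inner_sub_right, real_inner_smul_left, real_inner_smul_right,
    real_inner_comm e.1 e.2, real_inner_comm e.1 u, real_inner_comm e.2 u]
  field_simp
  ring

end PICascade

/-- the PI-cascade system `ẋ¹ = -v x¹ + k x² + u`, `ẋ² = u`, `y = x¹`
with `0 < k < v` is equilibrium-independent passive: for each equilibrium
`x̄` (with `ū = 0`, `ȳ = x̄¹`) there is a quadratic storage function satisfying the
dissipation inequality. -/
theorem stmt8 {m : ℕ} (v k : ℝ) (hk : 0 < k) (hv : k < v)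
    (xbar : EuclideanSpace ℝ (Fin m) × EuclideanSpace ℝ (Fin m))
    (ubar : EuclideanSpace ℝ (Fin m)) (hub : ubar = 0)
    (heq : -v • xbar.1 + k • xbar.2 + ubar = 0) :
    ∃ V : EuclideanSpace ℝ (Fin m) × EuclideanSpace ℝ (Fin m) → ℝ,
      Differentiable ℝ V ∧
      (∃ B : (EuclideanSpace ℝ (Fin m) × EuclideanSpace ℝ (Fin m)) →ₗ[ℝ]
          (EuclideanSpace ℝ (Fin m) × EuclideanSpace ℝ (Fin m)) →ₗ[ℝ] ℝ,
        ∀ x, V x = B (x - xbar) (x - xbar)) ∧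
      (∀ x, 0 ≤ V x) ∧ V xbar = 0 ∧
      (∀ (x : EuclideanSpace ℝ (Fin m) × EuclideanSpace ℝ (Fin m))
         (u : EuclideanSpace ℝ (Fin m)),
        fderiv ℝ V x (-v • x.1 + k • x.2 + u, u) ≤ ⟪x.1 - xbar.1, u - ubar⟫) := by
  subst hub
  have hbar : -v • xbar.1 + k • xbar.2 = 0 := by simpa using heq
  refine ⟨fun x => piStorageForm v k (x - xbar) (x - xbar), differentiable_bilinear_sub_self _ _,
    ⟨(piStorageForm v k).toLinearMap₁₂, fun x => rfl⟩,
    fun x => piStorageForm_self_nonneg hk.le hv _, by simp, fun x u => ?_⟩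
  have hshift : -v • x.1 + k • x.2 + u = -v • (x - xbar).1 + k • (x - xbar).2 + u := by
    simp only [Prod.fst_sub, Prod.snd_sub, smul_sub]
    linear_combination (norm := module) hbar
  rw [fderiv_bilinear_sub_self_apply, hshift, piStorageForm_along_field hv, sub_zero]
  have := div_nonneg (sq_nonneg ‖v • (x - xbar).1 - k • (x - xbar).2‖) (sub_pos.2 hv).le
  simp only [Prod.fst_sub] at this ⊢
  linarith
end

section
/- Let S = {x ∈ ℝ^n : h_k(x) ≤ 0, k = 1,…,r} with h_k continuously differentiable, and suppose for every x ∈ ∂S there is a Lipschitz vector field f₀ with ∇h_k(x)ᵀ f₀(x) < 0 for all active k (all k with h_k(x) = 0), and the constraint qualification of a 'practical set' holds. Then for every x ∈ ∂S, the Bouligand tangent cone is T_S(x) = {z ∈ ℝ^n : ∇h_k(x)ᵀ z ≤ 0 for all active k}. -/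
open scoped RealInnerProductSpace

/-- Bouligand tangent cone of `S` at `x`. -/
noncomputable def bouligandCone {n : ℕ} (S : Set (EuclideanSpace ℝ (Fin n)))
    (x : EuclideanSpace ℝ (Fin n)) : Set (EuclideanSpace ℝ (Fin n)) :=
  {v | Filter.liminf (fun t : ℝ => Metric.infDist (x + t • v) S / t)
      (nhdsWithin 0 (Set.Ioi 0)) = 0}

/-!
Let `z` satisfy the linearized constraints at `x`. Adding a small multiple of the interior-pointing
direction `d = f₀ x` makes every active constraint strictly decreasing along `z + ε • d`, so the
whole ray `x + t • (z + ε • d)` stays in `S` for small `t`; hence `z`, a limit of such feasible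
directions, is tangent. Conversely, if `x + t • z` is within `o(t)` of `S`, the local Lipschitz
bound `h_k ≤ L · dist(·, S)` near `x` forces `h_k (x + t • z) = o(t)` for an active `k`, so the
directional derivative `⟪∇h_k x, z⟫` is `≤ 0`.
-/

open Filter Metric Set Topology

theorem tendsto_add_smul_nhdsGT_zero {F : Type*} [NormedAddCommGroup F] [NormedSpace ℝ F]
    (x v : F) :
    Tendsto (fun t : ℝ => x + t • v) (𝓝[>] 0) (𝓝 x) := by
  have hcont : Continuous fun t : ℝ => x + t • v := by fun_prop
  simpa using (hcont.tendsto 0).mono_left nhdsWithin_le_nhds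

section Rays

variable {E : Type*} [NormedAddCommGroup E] [InnerProductSpace ℝ E]

theorem DifferentiableAt.tendsto_slope_add_smul [CompleteSpace E] {f : E → ℝ} {x : E}
    (hf : DifferentiableAt ℝ f x) (v : E) :
    Tendsto (fun t : ℝ => (f (x + t • v) - f x) / t) (𝓝[>] 0)
      (𝓝 ⟪gradient f x, v⟫) := by
  have hline := hf.hasGradientAt.hasFDerivAt.hasLineDerivAt v
  rw [InnerProductSpace.toDual_apply_apply, HasLineDerivAt, hasDerivAt_iff_tendsto_slope] at hline
  refine (hline.mono_left (nhdsWithin_mono _ fun t (ht : 0 < t) => ht.ne')).congr fun t => ?_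
  simp [slope_def_field]

theorem eventually_nonpos_add_smul [CompleteSpace E] {f : E → ℝ} {x w : E}
    (hf : DifferentiableAt ℝ f x) (hfx : f x ≤ 0) (hw : f x = 0 → ⟪gradient f x, w⟫ < 0) :
    ∀ᶠ t in 𝓝[>] (0 : ℝ), f (x + t • w) ≤ 0 := by
  rcases hfx.lt_or_eq with hneg | hzero
  · exact ((hf.continuousAt.tendsto.comp (tendsto_add_smul_nhdsGT_zero x w)).eventually_lt_const
      hneg).mono fun t ht => ht.le
  · filter_upwards [(hf.tendsto_slope_add_smul w).eventually_lt_const (hw hzero),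
      self_mem_nhdsWithin] with t hslope (ht : 0 < t)
    rw [hzero, sub_zero, div_lt_iff₀ ht, zero_mul] at hslope
    exact hslope.le

end Rays

theorem eventually_le_mul_infDist {α : Type*} [PseudoMetricSpace α] [ProperSpace α] {S : Set α}
    {f : α → ℝ} {x : α} {L : NNReal} {s : Set α} (hS : IsClosed S) (hxS : x ∈ S)
    (hfS : ∀ y ∈ S, f y ≤ 0) (hs : s ∈ 𝓝 x) (hf : LipschitzOnWith L f s) :
    ∀ᶠ p in 𝓝 x, f p ≤ L * infDist p S := by
  obtain ⟨ρ, hρ, hball⟩ := Metric.mem_nhds_iff.mp hs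
  filter_upwards [ball_mem_nhds x (half_pos hρ)] with p hp
  obtain ⟨y, hyS, hy⟩ := hS.exists_infDist_eq_dist ⟨x, hxS⟩ p
  have hpx : dist p x < ρ / 2 := hp
  -- the nearest point `y` is at most as far from `p` as `x` is, so it stays in the ball
  have hyx : dist y x < ρ := by
    have hpS := infDist_le_dist_of_mem (x := p) hxS
    linarith [dist_triangle_left y x p]
  calc f p ≤ f y + L * dist p y := hf.le_add_mul (hball (mem_ball.2 (by linarith))) (hball hyx)
    _ ≤ L * infDist p S := by rw [hy]; linarith [hfS y hyS]

section BouligandCone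

variable {n : ℕ} {S : Set (EuclideanSpace ℝ (Fin n))} {x v : EuclideanSpace ℝ (Fin n)}

theorem mem_bouligandCone_iff (hxS : x ∈ S) :
    v ∈ bouligandCone S x ↔ ∀ ε > 0, ∃ᶠ t in 𝓝[>] (0 : ℝ), infDist (x + t • v) S < ε * t := by
  set u := fun t : ℝ => infDist (x + t • v) S / t
  have hpos : ∀ᶠ t in 𝓝[>] (0 : ℝ), 0 < t := self_mem_nhdsWithin
  have hlow : ∀ᶠ t in 𝓝[>] (0 : ℝ), 0 ≤ u t := hpos.mono fun t ht => div_nonneg infDist_nonneg ht.le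
  have hup : ∀ᶠ t in 𝓝[>] (0 : ℝ), u t ≤ ‖v‖ := hpos.mono fun t ht => by
    rw [div_le_iff₀ ht]
    calc infDist (x + t • v) S ≤ dist (x + t • v) x := infDist_le_dist_of_mem hxS
      _ = ‖v‖ * t := by rw [dist_eq_norm, add_sub_cancel_left, norm_smul, Real.norm_of_nonneg ht.le,
          mul_comm]
  have hbdd : IsBoundedUnder (· ≤ ·) (𝓝[>] (0 : ℝ)) u := isBoundedUnder_of_eventually_le hup
  have hbdd' : IsBoundedUnder (· ≥ ·) (𝓝[>] (0 : ℝ)) u := isBoundedUnder_of_eventually_ge hlow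
  have hsmall : ∀ ε, (∃ᶠ t in 𝓝[>] (0 : ℝ), infDist (x + t • v) S < ε * t) ↔
      ∃ᶠ t in 𝓝[>] (0 : ℝ), u t < ε := fun ε =>
    frequently_congr (hpos.mono fun t ht => by rw [div_lt_iff₀ ht])
  simp only [hsmall]
  refine ⟨fun hv ε hε => frequently_lt_of_liminf_lt hbdd.isCoboundedUnder_ge (hv.trans_lt hε),
    fun hv => le_antisymm ?_ (le_liminf_of_le hbdd.isCoboundedUnder_ge hlow)⟩
  refine le_of_forall_pos_le_add fun ε hε => ?_
  rw [zero_add]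
  exact liminf_le_of_frequently_le ((hv ε hε).mono fun t ht => ht.le) hbdd'

theorem inner_gradient_nonpos_of_mem_bouligandCone {f : EuclideanSpace ℝ (Fin n) → ℝ}
    (hf : ContDiffAt ℝ 1 f x) (hS : IsClosed S) (hxS : x ∈ S) (hfS : ∀ y ∈ S, f y ≤ 0)
    (hfx : f x = 0) (hv : v ∈ bouligandCone S x) : ⟪gradient f x, v⟫ ≤ 0 := by
  obtain ⟨L, s, hs, hLip⟩ := hf.exists_lipschitzOnWith
  have hgrowth := (tendsto_add_smul_nhdsGT_zero x v).eventually
    (eventually_le_mul_infDist hS hxS hfS hs hLip)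
  have hslope := (hf.differentiableAt one_ne_zero).tendsto_slope_add_smul v
  refine le_of_forall_pos_le_add fun ε hε => ?_
  have hεL : 0 < ε / (L + 1) := by positivity
  -- along a sequence of `t` with `x + t • v` within `ε / (L + 1) * t` of `S`, the slope is `≤ ε`
  refine le_of_tendsto_of_frequently hslope
    ((((mem_bouligandCone_iff hxS).mp hv _ hεL).and_eventually
      (hgrowth.and self_mem_nhdsWithin)).mono ?_)
  rintro t ⟨hnear, hle, ht : 0 < t⟩
  rw [hfx, sub_zero, zero_add, div_le_iff₀ ht]
  have hL : (L : ℝ) * (ε / (L + 1)) ≤ ε := by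
    rw [mul_div_assoc', div_le_iff₀ (by positivity)]
    nlinarith
  calc f (x + t • v) ≤ L * infDist (x + t • v) S := hle
    _ ≤ L * (ε / (L + 1) * t) := by gcongr
    _ ≤ ε * t := by rw [← mul_assoc]; gcongr

theorem mem_bouligandCone_of_mem_closure (hxS : x ∈ S)
    (hv : v ∈ closure {w | ∀ᶠ t in 𝓝[>] (0 : ℝ), x + t • w ∈ S}) : v ∈ bouligandCone S x := by
  refine (mem_bouligandCone_iff hxS).mpr fun ε hε => Eventually.frequently ?_
  obtain ⟨w, hwS, hvw⟩ := Metric.mem_closure_iff.mp hv ε hε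
  filter_upwards [hwS, self_mem_nhdsWithin] with t htS (ht : 0 < t)
  calc infDist (x + t • v) S ≤ dist (x + t • v) (x + t • w) := infDist_le_dist_of_mem htS
    _ = dist v w * t := by
      rw [dist_add_left, dist_smul₀, Real.norm_of_nonneg ht.le, mul_comm]
    _ < ε * t := by gcongr

end BouligandCone

theorem isClosed_setOf_forall_nonpos {α ι : Type*} [TopologicalSpace α] {h : ι → α → ℝ}
    (hh : ∀ k, Continuous (h k)) : IsClosed {y | ∀ k, h k y ≤ 0} := by
  simp only [ofPred_forall]
  exact isClosed_iInter fun k => isClosed_le (hh k) continuous_const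

/-- `hd` is the Mangasarian–Fromovitz constraint qualification at `x`. -/
theorem bouligandCone_setOf_forall_nonpos {n : ℕ} {ι : Type*} [Finite ι]
    {h : ι → EuclideanSpace ℝ (Fin n) → ℝ} (hC1 : ∀ k, ContDiff ℝ 1 (h k))
    {x d : EuclideanSpace ℝ (Fin n)} (hx : ∀ k, h k x ≤ 0)
    (hd : ∀ k, h k x = 0 → ⟪gradient (h k) x, d⟫ < 0) :
    bouligandCone {y | ∀ k, h k y ≤ 0} x = {z | ∀ k, h k x = 0 → ⟪gradient (h k) x, z⟫ ≤ 0} := by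
  have hclosed := isClosed_setOf_forall_nonpos fun k => (hC1 k).continuous
  have hdiff : ∀ k, DifferentiableAt ℝ (h k) x := fun k =>
    (hC1 k).differentiable one_ne_zero x
  ext z
  refine ⟨fun hz k hk => inner_gradient_nonpos_of_mem_bouligandCone (hC1 k).contDiffAt hclosed
    hx (fun y hy => hy k) hk hz, fun hz => mem_bouligandCone_of_mem_closure hx ?_⟩
  have hlim : Tendsto (fun ε : ℝ => z + ε • d) (𝓝[>] 0) (𝓝 z) := tendsto_add_smul_nhdsGT_zero z d
  refine mem_closure_of_tendsto hlim (eventually_mem_nhdsWithin.mono fun ε (hε : 0 < ε) => ?_)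
  refine eventually_all.mpr fun k => eventually_nonpos_add_smul (hdiff k) (hx k) fun hk => ?_
  rw [inner_add_right, inner_smul_right]
  nlinarith [hz k hk, hd k hk]

theorem stmt12_general {n r : ℕ} (h : Fin r → EuclideanSpace ℝ (Fin n) → ℝ)
    (hC1 : ∀ k, ContDiff ℝ 1 (h k))
    (S : Set (EuclideanSpace ℝ (Fin n)))
    (hS : S = {x | ∀ k, h k x ≤ 0})
    (f₀ : EuclideanSpace ℝ (Fin n) → EuclideanSpace ℝ (Fin n))
    (hf₀ : ∀ x ∈ frontier S, ∀ k, h k x = 0 → ⟪gradient (h k) x, f₀ x⟫ < 0) :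
    ∀ x ∈ frontier S,
      bouligandCone S x = {z | ∀ k, h k x = 0 → ⟪gradient (h k) x, z⟫ ≤ 0} := by
  intro x hx
  subst hS
  have hxS := (isClosed_setOf_forall_nonpos fun k => (hC1 k).continuous).frontier_subset hx
  exact bouligandCone_setOf_forall_nonpos hC1 hxS (hf₀ x hx)

/-- for a practical set `S = {x | h_k(x) ≤ 0}` satisfying the Slater-type
condition and admitting an interior-pointing Lipschitz vector field, the Bouligand
tangent cone at a boundary point is `{z | ∇h_k(x)ᵀz ≤ 0 for all active k}`. -/
theorem stmt12 {n r : ℕ} (h : Fin r → EuclideanSpace ℝ (Fin n) → ℝ)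
    (hC1 : ∀ k, ContDiff ℝ 1 (h k))
    (S : Set (EuclideanSpace ℝ (Fin n)))
    (hS : S = {x | ∀ k, h k x ≤ 0})
    (hslater : ∀ x ∈ S, ∃ z, ∀ k, h k x + ⟪gradient (h k) x, z⟫ < 0)
    (f₀ : EuclideanSpace ℝ (Fin n) → EuclideanSpace ℝ (Fin n))
    (K : NNReal) (hf₀lip : LipschitzWith K f₀)
    (hf₀ : ∀ x ∈ frontier S, ∀ k, h k x = 0 → ⟪gradient (h k) x, f₀ x⟫ < 0) :
    ∀ x ∈ frontier S,
      bouligandCone S x = {z | ∀ k, h k x = 0 → ⟪gradient (h k) x, z⟫ ≤ 0} :=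
  stmt12_general h hC1 S hS f₀ hf₀
end

section
/- Nagumo's theorem for locally Lipschitz vector fields: a closed set 𝒳 ⊆ ℝ^n is positively invariant for ẋ = f(x) (f locally Lipschitz, solutions assumed to exist globally) if and only if f(x) ∈ T_𝒳(x) for all x ∈ 𝒳, where T_𝒳(x) is the Bouligand tangent cone. -/
open scoped RealInnerProductSpace

/-! Necessity: if the solution through `p` stays in `X`, then
`dist (p + t • f p, X) ≤ ‖x t - p - t • f p‖ = o(t)`.

Sufficiency: along a solution, `g t = dist (x t, X)` has upper right Dini derivative at most
`K * g t`, `K` a local Lipschitz constant of `f`. Indeed, if `p` is a nearest point of `X` to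
`x s`, then `x (s + h)` is within `g s + h * K * g s + o(h)` of `p + h • f p`, whose distance to
`X` is `o(h)` along a sequence `h → 0⁺` by tangency. As `g` vanishes at a point of `X`,
Gronwall's inequality keeps it zero on a right neighbourhood, and continuous induction on `[0, t]`
concludes. -/

open Metric Set Filter Topology

lemma IsClosed.exists_infDist_eq_dist_and_dist_map_le {α β : Type*} [PseudoMetricSpace α]
    [ProperSpace α] [PseudoMetricSpace β] {f : α → β} {K : NNReal} {X : Set α} {a y : α} {ε : ℝ}
    (hX : IsClosed X) (hK : LipschitzOnWith K f (ball a ε)) (ha : a ∈ X)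
    (hy : dist y a < ε / 2) :
    ∃ p ∈ X, infDist y X = dist y p ∧ dist (f y) (f p) ≤ K * infDist y X := by
  obtain ⟨p, hpX, hyp⟩ := hX.exists_infDist_eq_dist ⟨a, ha⟩ y
  have hya : infDist y X ≤ dist y a := infDist_le_dist_of_mem ha
  have hpa : dist p a < ε := by
    linarith [dist_triangle p y a, dist_comm y p]
  refine ⟨p, hpX, hyp, ?_⟩
  rw [hyp]
  exact hK.dist_le_mul y (mem_ball.2 (by linarith [dist_nonneg (x := y) (y := a)])) p
    (mem_ball.2 hpa)

section NormedSpace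

variable {E : Type*} [NormedAddCommGroup E] [NormedSpace ℝ E]

lemma infDist_add_smul_div_le_norm {S : Set E} {p : E} (hp : p ∈ S) (v : E) {t : ℝ}
    (ht : 0 < t) : infDist (p + t • v) S / t ≤ ‖v‖ := by
  rw [div_le_iff₀ ht]
  calc infDist (p + t • v) S ≤ dist (p + t • v) p := infDist_le_dist_of_mem hp
    _ = ‖v‖ * t := by simp [norm_smul, abs_of_pos ht, mul_comm]

lemma frequently_infDist_add_smul_div_lt {S : Set E} {p v : E} (hp : p ∈ S)
    (hv : liminf (fun t : ℝ => infDist (p + t • v) S / t) (𝓝[>] 0) = 0) {ε : ℝ} (hε : 0 < ε) :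
    ∃ᶠ t in 𝓝[>] (0 : ℝ), infDist (p + t • v) S / t < ε :=
  frequently_lt_of_liminf_lt
    (isCoboundedUnder_ge_of_eventually_le _ <| eventually_nhdsWithin_of_forall fun _ ht =>
      infDist_add_smul_div_le_norm hp v ht)
    (by rwa [hv])

lemma tendsto_infDist_add_smul_div_of_hasDerivWithinAt {S : Set E} {x : ℝ → E} {v : E}
    (hx : HasDerivWithinAt x v (Ioi 0) 0) (hS : ∀ᶠ t in 𝓝[>] 0, x t ∈ S) :
    Tendsto (fun t : ℝ => infDist (x 0 + t • v) S / t) (𝓝[>] 0) (𝓝 0) := by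
  have hrem : Tendsto (fun t : ℝ => ‖x t - x 0 - (t - 0) • v‖ / ‖t - 0‖) (𝓝[>] 0) (𝓝 0) :=
    (hasDerivWithinAt_iff_isLittleO.mp hx).norm_norm.tendsto_div_nhds_zero
  refine squeeze_zero' (eventually_nhdsWithin_of_forall fun t (ht : 0 < t) =>
    div_nonneg infDist_nonneg ht.le) ?_ hrem
  filter_upwards [hS, self_mem_nhdsWithin] with t hxt (ht : 0 < t)
  rw [sub_zero, Real.norm_eq_abs, abs_of_pos ht]
  gcongr
  calc infDist (x 0 + t • v) S ≤ dist (x 0 + t • v) (x t) := infDist_le_dist_of_mem hxt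
    _ = ‖x t - x 0 - t • v‖ := by rw [dist_comm, dist_eq_norm, sub_add_eq_sub_sub]

lemma infDist_le_of_infDist_eq_dist {S : Set E} {a b p v w : E} {h : ℝ} (hh : 0 ≤ h)
    (hap : infDist a S = dist a p) :
    infDist b S ≤ infDist a S + infDist (p + h • w) S + ‖b - a - h • v‖ + h * ‖v - w‖ := by
  have hsplit : b - (p + h • w) = (b - a - h • v) + (a - p) + h • (v - w) := by module
  calc infDist b S ≤ infDist (p + h • w) S + dist b (p + h • w) := infDist_le_infDist_add_dist
    _ ≤ infDist (p + h • w) S + (‖b - a - h • v‖ + ‖a - p‖ + ‖h • (v - w)‖) := by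
        rw [dist_eq_norm, hsplit]
        gcongr
        exact norm_add₃_le
    _ = _ := by
        rw [← dist_eq_norm a p, ← hap, norm_smul, Real.norm_eq_abs, abs_of_nonneg hh]
        ring

lemma frequently_slope_infDist_lt {S : Set E} {x : ℝ → E} {s : ℝ} {v p w : E}
    (hx : HasDerivWithinAt x v (Ioi s) s) (hp : p ∈ S) (hxp : infDist (x s) S = dist (x s) p)
    (hw : liminf (fun t : ℝ => infDist (p + t • w) S / t) (𝓝[>] 0) = 0) {r : ℝ}
    (hr : ‖v - w‖ < r) :
    ∃ᶠ u in 𝓝[>] s, (u - s)⁻¹ * (infDist (x u) S - infDist (x s) S) < r := by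
  set ε := (r - ‖v - w‖) / 2 with hε
  have hε_pos : 0 < ε := by linarith
  have hrem : ∀ᶠ u in 𝓝[>] s, ‖x u - x s - (u - s) • v‖ ≤ ε * ‖u - s‖ :=
    (hasDerivWithinAt_iff_isLittleO.mp hx).bound hε_pos
  have hmap : map (s + ·) (𝓝[>] (0 : ℝ)) = 𝓝[>] s := by
    rw [map_add_left_nhdsGT, add_zero]
  rw [← hmap, frequently_map]
  rw [← hmap, eventually_map] at hrem
  refine ((frequently_infDist_add_smul_div_lt hp hw hε_pos).and_eventually
    (hrem.and self_mem_nhdsWithin)).mono ?_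
  rintro h ⟨hdist, hrem_h, hh : 0 < h⟩
  rw [div_lt_iff₀ hh] at hdist
  rw [add_sub_cancel_left, Real.norm_eq_abs, abs_of_pos hh] at hrem_h
  have hstep := infDist_le_of_infDist_eq_dist (b := x (s + h)) (v := v) (w := w) hh.le hxp
  have hr_split : h * r = ε * h + ε * h + h * ‖v - w‖ := by rw [hε]; ring
  rw [add_sub_cancel_left, inv_mul_lt_iff₀ hh]
  linarith

lemma eventually_nhdsGT_mem_of_subtangential [ProperSpace E] {f : E → E} (hf : LocallyLipschitz f)
    {X : Set E} (hX : IsClosed X)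
    (hcone : ∀ p ∈ X, liminf (fun t : ℝ => infDist (p + t • f p) X / t) (𝓝[>] 0) = 0)
    {x : ℝ → E} (hx : ∀ t, HasDerivAt x (f (x t)) t) {τ : ℝ} (hτ : x τ ∈ X) :
    ∀ᶠ s in 𝓝[>] τ, x s ∈ X := by
  obtain ⟨K, U, hU, hK⟩ := hf (x τ)
  obtain ⟨ε, hε, hεU⟩ := Metric.mem_nhds_iff.mp hU
  obtain ⟨δ, hδ, hδε⟩ := Metric.eventually_nhds_iff_ball.mp <|
    (hx τ).continuousAt.eventually (ball_mem_nhds (x τ) (half_pos hε))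
  have hnear : ∀ s ∈ Icc τ (τ + δ / 2), dist (x s) (x τ) < ε / 2 := fun s hs =>
    hδε s (by rw [mem_ball, Real.dist_eq, abs_of_nonneg (by linarith [hs.1])]; linarith [hs.2])
  set g : ℝ → ℝ := fun u => infDist (x u) X
  have hg : ∀ s ∈ Icc τ (τ + δ / 2), g s ≤ gronwallBound 0 K 0 (s - τ) := by
    refine le_gronwallBound_of_liminf_deriv_right_le (f' := fun u => K * g u)
      ((continuous_infDist_pt X).comp_continuousOn
        fun s _ => (hx s).continuousAt.continuousWithinAt) ?_ (by simp [g, infDist_zero_of_mem hτ])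
      fun _ _ => by simp
    intro s hs r hr
    obtain ⟨p, hpX, hxp, hfp⟩ :=
      hX.exists_infDist_eq_dist_and_dist_map_le (hK.mono hεU) hτ
        (hnear s (Ico_subset_Icc_self hs))
    exact frequently_slope_infDist_lt (hx s).hasDerivWithinAt hpX hxp (hcone p hpX)
      (((dist_eq_norm _ _).symm.trans_le hfp).trans_lt hr)
  have hsub : Icc τ (τ + δ / 2) ⊆ x ⁻¹' X := fun s hs =>
    (hX.mem_iff_infDist_zero ⟨x τ, hτ⟩).2 <|
      le_antisymm ((hg s hs).trans_eq (gronwallBound_ε0_δ0 _ _)) infDist_nonneg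
  exact mem_of_superset (Icc_mem_nhdsGT (by linarith)) hsub

end NormedSpace

/-- Nagumo's theorem: for a locally Lipschitz vector field whose solutions
exist globally, a closed set `𝒳` is positively invariant for `ẋ = f(x)` iff
`f(x) ∈ T_𝒳(x)` for all `x ∈ 𝒳`. -/
theorem stmt13 {n : ℕ} (f : EuclideanSpace ℝ (Fin n) → EuclideanSpace ℝ (Fin n))
    (hf : LocallyLipschitz f)
    (hglob : ∀ x₀ : EuclideanSpace ℝ (Fin n), ∃ x : ℝ → EuclideanSpace ℝ (Fin n),
      x 0 = x₀ ∧ ∀ t, HasDerivAt x (f (x t)) t)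
    (X : Set (EuclideanSpace ℝ (Fin n))) (hX : IsClosed X) :
    (∀ p ∈ X, f p ∈ bouligandCone X p) ↔
      (∀ x : ℝ → EuclideanSpace ℝ (Fin n),
        (∀ t, HasDerivAt x (f (x t)) t) → x 0 ∈ X → ∀ t, 0 ≤ t → x t ∈ X) := by
  constructor
  · intro hcone x hx hx0 t ht
    have hxc : Continuous x := continuous_iff_continuousAt.2 fun t => (hx t).continuousAt
    exact IsClosed.Icc_subset_of_forall_mem_nhdsWithin ((hX.preimage hxc).inter isClosed_Icc)
      hx0 (fun τ hτ => eventually_nhdsGT_mem_of_subtangential hf hX hcone hx hτ.1) ⟨ht, le_rfl⟩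
  · intro hinv p hp
    obtain ⟨x, rfl, hx⟩ := hglob p
    exact (tendsto_infDist_add_smul_div_of_hasDerivWithinAt (hx 0).hasDerivWithinAt
      (eventually_nhdsWithin_of_forall fun t ht => hinv x hx hp t ht.le)).liminf_eq
end
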